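/- arXiv:1512.04368 — 4 statements merged into one kernel-verified Lean document; each statement's English description precedes it below -/
import Mathlib

section
/- Fix $d\ge 1$ and $\eta\in(0,1)$. Let $(p_w)_{w\in\Sigma^*}$ be independent Bernoulli variables indexed by finite words over $\{0,1\}^d$ with $\mathbb{P}(p_w=1)=2^{-d(1-\eta)|w|}$. Set $\epsilon_j=(\log^2 j)/j$. Then almost surely, for all sufficiently large $j$, every word $W$ of length $\lfloor j(\eta-\epsilon_j)\rfloor$ admits an extension $w$ of length $j$ (with $W$ a prefix of $w$) such that $p_w=1$. -/
/-!
A fixed word `W` of length `m = ⌊ηj - log² j⌋` has `2^{d(j-m)}` extensions of length `j`, each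
surviving independently with probability `x = 2^{-d(1-η)j}`, so all of them die with probability
`(1-x)^{2^{d(j-m)}} ≤ exp(-2^{d(j-m)} x) ≤ exp(-2^{log² j})`. A union bound over the `2^{dm}` words
of length `m` gives failure probability at most `2^{dj} exp(-2^{log² j}) ≤ j⁻²` for large `j`,
which is summable, and Borel–Cantelli concludes.
-/

open MeasureTheory ProbabilityTheory Filter
open scoped ENNReal

namespace List

def wordsOfLength (α : Type*) [Fintype α] (n : ℕ) : Finset (List α) :=
  (Finset.univ : Finset (List.Vector α n)).map ⟨List.Vector.toList, List.Vector.toList_injective⟩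

variable {α : Type*} [Fintype α]

@[simp]
theorem mem_wordsOfLength {n : ℕ} {W : List α} : W ∈ wordsOfLength α n ↔ W.length = n := by
  simpa [wordsOfLength] using ⟨fun ⟨v, hv⟩ => hv ▸ v.toList_length, fun h => ⟨⟨W, h⟩, rfl⟩⟩

theorem card_wordsOfLength (n : ℕ) : (wordsOfLength α n).card = Fintype.card α ^ n := by
  simp [wordsOfLength]

def extensions (W : List α) (k : ℕ) : Finset (List α) :=
  (wordsOfLength α k).map ⟨(W ++ ·), append_right_injective W⟩

theorem card_extensions (W : List α) (k : ℕ) :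
    (W.extensions k).card = Fintype.card α ^ k := by
  simp [extensions, card_wordsOfLength]

theorem prefix_and_length_of_mem_extensions {W w : List α} {k : ℕ} (hw : w ∈ W.extensions k) :
    W <+: w ∧ w.length = W.length + k := by
  obtain ⟨u, hu, rfl⟩ := Finset.mem_map.1 hw
  exact ⟨prefix_append W u, by simpa using mem_wordsOfLength.1 hu⟩

end List

theorem ENNReal.one_sub_ofReal_pow_le {x : ℝ} (hx : 0 ≤ x) (n : ℕ) :
    (1 - ENNReal.ofReal x) ^ n ≤ ENNReal.ofReal (Real.exp (-(n * x))) := by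
  calc (1 - ENNReal.ofReal x) ^ n = ENNReal.ofReal (1 - x) ^ n := by
        rw [ENNReal.ofReal_sub 1 hx, ENNReal.ofReal_one]
    _ ≤ ENNReal.ofReal (Real.exp (-x)) ^ n := by
        gcongr; exact Real.one_sub_le_exp_neg x
    _ = ENNReal.ofReal (Real.exp (-(n * x))) := by
        rw [← ENNReal.ofReal_pow (Real.exp_nonneg _), ← Real.exp_nat_mul, mul_neg]

theorem MeasureTheory.ae_eventually_notMem_of_eventually_le {Ω : Type*} [MeasurableSpace Ω]
    {μ : Measure Ω} {s : ℕ → Set Ω} {g : ℕ → ℝ≥0∞} (hle : ∀ᶠ n in atTop, μ (s n) ≤ g n)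
    (hg : ∑' n, g n ≠ ∞) : ∀ᵐ ω ∂μ, ∀ᶠ n in atTop, ω ∉ s n := by
  obtain ⟨k, hk⟩ := eventually_atTop.1 hle
  have htail : ∑' n, μ (if k ≤ n then s n else ∅) ≠ ∞ := by
    refine ne_top_of_le_ne_top hg (ENNReal.tsum_le_tsum fun n => ?_)
    split_ifs with h
    exacts [hk n h, by simp]
  filter_upwards [ae_eventually_notMem htail] with ω hω
  filter_upwards [hω, eventually_ge_atTop k] with n hn hkn
  simpa [hkn] using hn

theorem ProbabilityTheory.iIndepFun.measure_forall_eq_false {ι Ω : Type*} [MeasurableSpace Ω]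
    {P : Measure Ω} [IsProbabilityMeasure P] {p : ι → Ω → Bool} (hmeas : ∀ i, Measurable (p i))
    (hindep : iIndepFun p P) (S : Finset ι) :
    P {ω | ∀ i ∈ S, p i ω = false} = ∏ i ∈ S, (1 - P {ω | p i ω = true}) := by
  have hset : {ω | ∀ i ∈ S, p i ω = false} = ⋂ i ∈ S, p i ⁻¹' {false} := by
    ext ω; simp
  rw [hset, hindep.meas_biInter fun i _ => ⟨{false}, trivial, rfl⟩]
  refine Finset.prod_congr rfl fun i _ => ?_
  have hcompl : p i ⁻¹' {false} = {ω | p i ω = true}ᶜ := by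
    ext ω; simp
  rw [hcompl, prob_compl_eq_one_sub (s := {ω | p i ω = true})
    (hmeas i (measurableSet_singleton true))]

section SurvivingExtensions

variable {Ω α : Type*} [MeasurableSpace Ω] {P : Measure Ω} [IsProbabilityMeasure P] [Fintype α]
  {p : List α → Ω → Bool}

theorem measure_no_surviving_extension_le (hmeas : ∀ w, Measurable (p w)) (hindep : iIndepFun p P)
    {j : ℕ} {x : ℝ} (hx : 0 ≤ x)
    (hprob : ∀ w : List α, w.length = j → P {ω | p w ω = true} = ENNReal.ofReal x)
    {W : List α} (hW : W.length ≤ j) :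
    P {ω | ¬ ∃ w, W <+: w ∧ w.length = j ∧ p w ω = true} ≤
      ENNReal.ofReal (Real.exp (-((Fintype.card α : ℝ) ^ (j - W.length) * x))) := by
  set E := W.extensions (j - W.length)
  have hlen : ∀ w ∈ E, W <+: w ∧ w.length = j := fun w hw => by
    have := List.prefix_and_length_of_mem_extensions hw
    exact ⟨this.1, by omega⟩
  have hsub : {ω | ¬ ∃ w, W <+: w ∧ w.length = j ∧ p w ω = true} ⊆
      {ω | ∀ w ∈ E, p w ω = false} := fun ω hω w hw => by
    simpa using fun h => hω ⟨w, (hlen w hw).1, (hlen w hw).2, h⟩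
  calc _ ≤ P {ω | ∀ w ∈ E, p w ω = false} := measure_mono hsub
    _ = (1 - ENNReal.ofReal x) ^ E.card := by
        rw [hindep.measure_forall_eq_false hmeas, Finset.prod_congr rfl
          fun w hw => by rw [hprob w (hlen w hw).2], Finset.prod_const]
    _ ≤ _ := by
        simpa [E, List.card_extensions] using ENNReal.one_sub_ofReal_pow_le hx E.card

theorem measure_exists_word_without_surviving_extension_le (hmeas : ∀ w, Measurable (p w))
    (hindep : iIndepFun p P) {j : ℕ} {x : ℝ} (hx : 0 ≤ x)
    (hprob : ∀ w : List α, w.length = j → P {ω | p w ω = true} = ENNReal.ofReal x)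
    {m : ℕ} (hmj : m ≤ j) :
    P {ω | ¬ ∀ W : List α, W.length = m → ∃ w, W <+: w ∧ w.length = j ∧ p w ω = true} ≤
      Fintype.card α ^ m *
        ENNReal.ofReal (Real.exp (-((Fintype.card α : ℝ) ^ (j - m) * x))) := by
  have hsub : {ω | ¬ ∀ W : List α, W.length = m → ∃ w, W <+: w ∧ w.length = j ∧ p w ω = true}
      ⊆ ⋃ W ∈ List.wordsOfLength α m, {ω | ¬ ∃ w, W <+: w ∧ w.length = j ∧ p w ω = true} := by
    intro ω hω
    push Not at hω
    obtain ⟨W, hW, hfail⟩ := hω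
    exact Set.mem_biUnion (List.mem_wordsOfLength.2 hW) (by simpa using hfail)
  calc _ ≤ _ := measure_mono hsub
    _ ≤ _ := measure_biUnion_finset_le _ _
    _ ≤ _ := by
        refine (Finset.sum_le_card_nsmul _ _ (ENNReal.ofReal
          (Real.exp (-((Fintype.card α : ℝ) ^ (j - m) * x)))) fun W hW => ?_).trans ?_
        · have hW := List.mem_wordsOfLength.1 hW
          exact hW ▸ measure_no_surviving_extension_le hmeas hindep hx hprob (hW ▸ hmj)
        · simp [List.card_wordsOfLength]

end SurvivingExtensions

section Estimates

open Real

theorem eventually_log_sq_le_mul {η : ℝ} (hη : 0 < η) :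
    ∀ᶠ j : ℕ in atTop, log j ^ 2 ≤ η * j := by
  have := (tendsto_pow_log_div_mul_add_atTop 1 0 2 one_ne_zero).eventually (gt_mem_nhds hη)
  filter_upwards [tendsto_natCast_atTop_atTop.eventually this, eventually_gt_atTop 0] with j hj hj0
  rw [one_mul, add_zero, div_lt_iff₀ (by positivity)] at hj
  linarith

theorem eventually_mul_add_two_mul_log_le_two_rpow_log_sq (c : ℝ) :
    ∀ᶠ x : ℝ in atTop, c * x + 2 * log x ≤ 2 ^ (log x ^ 2) := by
  filter_upwards [eventually_ge_atTop 1, eventually_ge_atTop (c + 2),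
    eventually_ge_atTop (exp (3 / log 2))] with x hx1 hxc hxe
  have hx0 : 0 < x := by linarith
  have hlog2 : 0 < log 2 := log_pos one_lt_two
  have hlogx : 3 ≤ log 2 * log x := by
    rw [← div_le_iff₀' hlog2]; exact (le_log_iff_exp_le hx0).2 hxe
  have hlogx0 : 0 ≤ log x := log_nonneg hx1
  calc c * x + 2 * log x ≤ (c + 2) * x := by linarith [log_le_sub_one_of_pos hx0]
    _ ≤ x * x := by gcongr
    _ ≤ x ^ 3 := by nlinarith
    _ = exp (log x * 3) := by rw [← rpow_def_of_pos hx0]; norm_cast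
    _ ≤ exp (log 2 * log x ^ 2) := exp_le_exp.2 (by nlinarith)
    _ = 2 ^ (log x ^ 2) := (rpow_def_of_pos two_pos _).symm

theorem pow_mul_exp_neg_le_inv_sq {d j m : ℕ} {η : ℝ} (hd : 1 ≤ d) (hj : 0 < j) (hmj : m ≤ j)
    (hm : (m : ℝ) ≤ η * j - log j ^ 2)
    (hgrowth : d * log 2 * j + 2 * log j ≤ 2 ^ (log j ^ 2)) :
    ((2 : ℝ) ^ d) ^ m * exp (-(((2 : ℝ) ^ d) ^ (j - m) * 2 ^ (-(d : ℝ) * (1 - η) * j))) ≤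
      ((j : ℝ) ^ 2)⁻¹ := by
  have hd1 : (1 : ℝ) ≤ d := by exact_mod_cast hd
  have hexpected : 2 ^ (log j ^ 2) ≤ ((2 : ℝ) ^ d) ^ (j - m) * 2 ^ (-(d : ℝ) * (1 - η) * j) := by
    rw [← pow_mul, ← rpow_natCast 2 (d * (j - m)), ← rpow_add two_pos]
    refine rpow_le_rpow_of_exponent_le one_le_two ?_
    push_cast [Nat.cast_sub hmj]
    nlinarith [sq_nonneg (log j)]
  have hwords : ((2 : ℝ) ^ d) ^ m ≤ exp (d * log 2 * j) := by
    rw [← pow_mul, show d * log 2 * j = log 2 * ((d * j : ℕ) : ℝ) by push_cast; ring,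
      ← rpow_def_of_pos two_pos, rpow_natCast]
    exact pow_le_pow_right₀ one_le_two (Nat.mul_le_mul_left d hmj)
  calc _ ≤ exp (d * log 2 * j) * exp (-2 ^ (log j ^ 2)) := by gcongr
    _ ≤ exp (-log ((j : ℝ) ^ 2)) := by
        rw [← exp_add, log_pow]; gcongr; push_cast; linarith
    _ = ((j : ℝ) ^ 2)⁻¹ := by rw [exp_neg, exp_log (by positivity)]

theorem natFloor_mul_sub_div_le {x η L : ℝ} (hx : 0 < x) (hL : L ≤ η * x) :
    (⌊x * (η - L / x)⌋₊ : ℝ) ≤ η * x - L := by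
  have hid : x * (η - L / x) = η * x - L := by field_simp
  rw [hid]; exact Nat.floor_le (by linarith)

theorem natFloor_mul_sub_div_le_self {η L : ℝ} (hη : η ≤ 1) (hL : 0 ≤ L) (j : ℕ) :
    ⌊(j : ℝ) * (η - L / j)⌋₊ ≤ j := by
  refine Nat.floor_le_of_le (mul_le_of_le_one_right (Nat.cast_nonneg j) ?_)
  linarith [div_nonneg hL (Nat.cast_nonneg (α := ℝ) j)]

end Estimates

/-- With `ε_j = (log j)^2 / j`, almost surely, for all large `j`, every word `W` of
length `⌊j(η-ε_j)⌋` admits a surviving extension of length `j`. -/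
theorem statement3 (d : ℕ) (hd : 1 ≤ d)
    {Ω : Type*} [MeasurableSpace Ω] (P : Measure Ω) [IsProbabilityMeasure P]
    (η : ℝ) (hη0 : 0 < η) (hη1 : η < 1)
    (p : List (Fin d → Bool) → Ω → Bool)
    (hmeas : ∀ w, Measurable (p w))
    (hindep : iIndepFun (m := fun _ : List (Fin d → Bool) => (inferInstance : MeasurableSpace Bool)) p P)
    (hbern : ∀ w : List (Fin d → Bool),
      P {ω | p w ω = true} = ENNReal.ofReal ((2:ℝ) ^ (-(d:ℝ) * (1 - η) * (w.length : ℝ)))) :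
    ∀ᵐ ω ∂P, ∀ᶠ j : ℕ in atTop, ∀ W : List (Fin d → Bool),
      W.length = ⌊(j:ℝ) * (η - (Real.log j)^2 / j)⌋₊ →
      ∃ w : List (Fin d → Bool), W <+: w ∧ w.length = j ∧ p w ω = true := by
  have hgrowth := tendsto_natCast_atTop_atTop.eventually
    (eventually_mul_add_two_mul_log_le_two_rpow_log_sq (d * Real.log 2))
  have hsum : ∑' j : ℕ, ENNReal.ofReal ((j : ℝ) ^ 2)⁻¹ ≠ ∞ := by
    rw [← ENNReal.ofReal_tsum_of_nonneg (fun _ => by positivity)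
      (Real.summable_nat_pow_inv.2 one_lt_two)]
    exact ENNReal.ofReal_ne_top
  refine (ae_eventually_notMem_of_eventually_le (s := fun j => {ω | ¬ ∀ W : List (Fin d → Bool),
      W.length = ⌊(j:ℝ) * (η - (Real.log j)^2 / j)⌋₊ →
      ∃ w, W <+: w ∧ w.length = j ∧ p w ω = true}) ?_ hsum).mono
    fun ω hω => hω.mono fun j hj => not_not.1 hj
  filter_upwards [eventually_log_sq_le_mul hη0, hgrowth, eventually_gt_atTop 0]
    with j hsmall hgrowth hj
  have hmj := natFloor_mul_sub_div_le_self hη1.le (sq_nonneg (Real.log j)) j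
  have hcard : (Fintype.card (Fin d → Bool) : ℝ) = 2 ^ d := by simp
  refine (measure_exists_word_without_surviving_extension_le hmeas hindep
    (Real.rpow_nonneg zero_le_two _) (fun w hw => hw ▸ hbern w) hmj).trans ?_
  rw [← ENNReal.ofReal_natCast, ← ENNReal.ofReal_pow (Nat.cast_nonneg _),
    ← ENNReal.ofReal_mul (by positivity), hcard]
  exact ENNReal.ofReal_le_ofReal (pow_mul_exp_neg_le_inv_sq hd (by exact_mod_cast hj) hmj
    (natFloor_mul_sub_div_le (by exact_mod_cast hj) hsmall) (by simpa using hgrowth))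
end

section
/- Let $\tau:\mathbb{R}\to\mathbb{R}$ be concave, let $q_0\in\mathbb{R}$, $c\ge 0$ and $h\ge 0$ satisfy $\tau(q_0)+c = \tau(q_0)+ h q_0$ (i.e. $c=hq_0$). Define $\tilde\tau(q)=\tau(q)+hq$ for $q\le q_0$ and $\tilde\tau(q)=\tau(q)+c$ for $q> q_0$. Then $\tilde\tau$ is concave and its Legendre transform satisfies: $\tilde\tau^*(H)=\tau^*(H-h)$ for $H\ge \tau'(q_0^-)+h$, $\tilde\tau^*(H)=q_0 H-\tau(q_0)-c$ for $\tau'(q_0^+)\le H\le \tau'(q_0^-)+h$, and $\tilde\tau^*(H)=\tau^*(H)-c$ for $H\le\tau'(q_0^+)$, where $\tau^*(H)=\inf_q(Hq-\tau(q))$. -/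
/-!
Since `c = h q₀`, the modified function is `τ q + h * min q q₀`, a sum of concave functions.
A concave `τ` lies below the line of slope `D` through `(q₀, τ q₀)` on `q ≤ q₀` when
`D ≤ τ'(q₀⁻)` and on `q ≥ q₀` when `τ'(q₀⁺) ≤ D`, and `τ'(q₀⁺) ≤ τ'(q₀⁻)`. Hence, for each range
of `H`, a point `q` on the wrong side of `q₀` can be replaced by `q₀` in the infimum defining
`τ̃^*(H)`, and on the remaining side `τ̃` is `τ` plus a linear or a constant term.
-/

open Filter

/-- The (concave) Legendre transform `g^*(H) = inf_q (Hq - g(q))`, with values in `EReal`. -/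
noncomputable def legendreTransform (g : ℝ → ℝ) (H : ℝ) : EReal :=
  ⨅ q : ℝ, ((H * q - g q : ℝ) : EReal)

open Set

namespace ConcaveOn

variable {S : Set ℝ} {f : ℝ → ℝ} {x y f' fl fr D : ℝ}

lemma rightDeriv_le_leftDeriv_of_hasDerivWithinAt (hf : ConcaveOn ℝ S f) (hx : x ∈ interior S)
    (hl : HasDerivWithinAt f fl (Iio x) x) (hr : HasDerivWithinAt f fr (Ioi x) x) : fr ≤ fl := by
  have := hf.neg.leftDeriv_le_rightDeriv_of_mem_interior hx
  rw [hl.neg.derivWithin (uniqueDiffWithinAt_Iio x),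
    hr.neg.derivWithin (uniqueDiffWithinAt_Ioi x)] at this
  linarith

lemma mul_sub_le_mul_sub_of_hasDerivWithinAt_Iio (hf : ConcaveOn ℝ S f) (hy : y ∈ S) (hx : x ∈ S)
    (hyx : y ≤ x) (hf' : HasDerivWithinAt f f' (Iio x) x) (hD : D ≤ f') :
    D * x - f x ≤ D * y - f y := by
  rcases hyx.eq_or_lt with rfl | hlt
  · rfl
  have hslope := hf.le_slope_of_hasDerivWithinAt_Iio hy hx hlt hf'
  rw [slope_def_field, le_div_iff₀ (sub_pos.2 hlt)] at hslope
  nlinarith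

lemma mul_sub_le_mul_sub_of_hasDerivWithinAt_Ioi (hf : ConcaveOn ℝ S f) (hx : x ∈ S) (hy : y ∈ S)
    (hxy : x ≤ y) (hf' : HasDerivWithinAt f f' (Ioi x) x) (hD : f' ≤ D) :
    D * x - f x ≤ D * y - f y := by
  rcases hxy.eq_or_lt with rfl | hlt
  · rfl
  have hslope := hf.slope_le_of_hasDerivWithinAt_Ioi hx hy hlt hf'
  rw [slope_def_field, div_le_iff₀ (sub_pos.2 hlt)] at hslope
  nlinarith

lemma add_mul_min {τ : ℝ → ℝ} (hτ : ConcaveOn ℝ univ τ) {h : ℝ} (hh : 0 ≤ h) (q₀ : ℝ) :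
    ConcaveOn ℝ univ (fun q => τ q + h * min q q₀) :=
  hτ.add ((concaveOn_id convex_univ).inf (concaveOn_const q₀ convex_univ) |>.smul hh)

end ConcaveOn

lemma legendreTransform_le_of_forall_exists {g g' : ℝ → ℝ} {H H' : ℝ}
    (h : ∀ q, ∃ q', H * q' - g q' ≤ H' * q - g' q) :
    legendreTransform g H ≤ legendreTransform g' H' :=
  le_iInf fun q => (h q).elim fun q' hq' => iInf_le_of_le q' (EReal.coe_le_coe_iff.2 hq')

lemma legendreTransform_eq_of_forall_le {g : ℝ → ℝ} {H q₀ : ℝ}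
    (h : ∀ q, H * q₀ - g q₀ ≤ H * q - g q) :
    legendreTransform g H = ((H * q₀ - g q₀ : ℝ) : EReal) :=
  le_antisymm (iInf_le _ q₀) (le_iInf fun q => EReal.coe_le_coe_iff.2 (h q))

lemma legendreTransform_add_mul (g : ℝ → ℝ) (a H : ℝ) :
    legendreTransform (fun q => g q + a * q) H = legendreTransform g (H - a) := by
  simp only [legendreTransform, show ∀ q, H * q - (g q + a * q) = (H - a) * q - g q from
    fun q => by ring]

lemma legendreTransform_add_const (g : ℝ → ℝ) (c H : ℝ) :
    legendreTransform (fun q => g q + c) H = legendreTransform g H - (c : EReal) := by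
  apply le_antisymm
  · rw [EReal.le_sub_iff_add_le (.inl (EReal.coe_ne_bot c)) (.inl (EReal.coe_ne_top c))]
    refine le_iInf fun q => ?_
    calc legendreTransform (fun q => g q + c) H + c
        ≤ ((H * q - (g q + c) : ℝ) : EReal) + c := add_le_add (iInf_le _ q) le_rfl
      _ = ((H * q - g q : ℝ) : EReal) := by norm_cast; ring
  · refine le_iInf fun q => ?_
    calc legendreTransform g H - c
        ≤ ((H * q - g q : ℝ) : EReal) - c := EReal.sub_le_sub (iInf_le _ q) le_rfl
      _ = ((H * q - (g q + c) : ℝ) : EReal) := by norm_cast; ring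

section Tilt

variable {τ : ℝ → ℝ} {q₀ h Dm Dp H : ℝ}

lemma legendreTransform_add_mul_min_of_leftDeriv_add_le (hτ : ConcaveOn ℝ univ τ) (hh : 0 ≤ h)
    (hDm : HasDerivWithinAt τ Dm (Iio q₀) q₀) (hDp : HasDerivWithinAt τ Dp (Ioi q₀) q₀)
    (hH : Dm + h ≤ H) :
    legendreTransform (fun q => τ q + h * min q q₀) H = legendreTransform τ (H - h) := by
  have hDpm := hτ.rightDeriv_le_leftDeriv_of_hasDerivWithinAt (by simp) hDm hDp
  rw [← legendreTransform_add_mul]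
  refine le_antisymm (legendreTransform_le_of_forall_exists fun q => ?_)
    (legendreTransform_le_of_forall_exists fun q => ⟨q, ?_⟩)
  · rcases le_total q q₀ with hq | hq
    · exact ⟨q, by rw [min_eq_left hq]⟩
    · refine ⟨q₀, ?_⟩
      have := hτ.mul_sub_le_mul_sub_of_hasDerivWithinAt_Ioi (D := H - h) trivial trivial hq hDp
        (by linarith)
      rw [min_self]
      linarith
  · nlinarith [min_le_left q q₀]

lemma legendreTransform_add_mul_min_of_mem_Icc (hτ : ConcaveOn ℝ univ τ)
    (hDm : HasDerivWithinAt τ Dm (Iio q₀) q₀) (hDp : HasDerivWithinAt τ Dp (Ioi q₀) q₀)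
    (hH₁ : Dp ≤ H) (hH₂ : H ≤ Dm + h) :
    legendreTransform (fun q => τ q + h * min q q₀) H = ((q₀ * H - τ q₀ - h * q₀ : ℝ) : EReal) := by
  rw [legendreTransform_eq_of_forall_le (q₀ := q₀) fun q => ?_]
  · rw [min_self]
    ring_nf
  rcases le_total q q₀ with hq | hq
  · have := hτ.mul_sub_le_mul_sub_of_hasDerivWithinAt_Iio (D := H - h) trivial trivial hq hDm
      (by linarith)
    rw [min_self, min_eq_left hq]
    linarith
  · have := hτ.mul_sub_le_mul_sub_of_hasDerivWithinAt_Ioi trivial trivial hq hDp hH₁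
    rw [min_self, min_eq_right hq]
    linarith

lemma legendreTransform_add_mul_min_of_le_rightDeriv (hτ : ConcaveOn ℝ univ τ) (hh : 0 ≤ h)
    (hDm : HasDerivWithinAt τ Dm (Iio q₀) q₀) (hDp : HasDerivWithinAt τ Dp (Ioi q₀) q₀)
    (hH : H ≤ Dp) :
    legendreTransform (fun q => τ q + h * min q q₀) H
      = legendreTransform τ H - ((h * q₀ : ℝ) : EReal) := by
  have hDpm := hτ.rightDeriv_le_leftDeriv_of_hasDerivWithinAt (by simp) hDm hDp
  rw [← legendreTransform_add_const]
  refine le_antisymm (legendreTransform_le_of_forall_exists fun q => ?_)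
    (legendreTransform_le_of_forall_exists fun q => ⟨q, ?_⟩)
  · rcases le_total q q₀ with hq | hq
    · refine ⟨q₀, ?_⟩
      have := hτ.mul_sub_le_mul_sub_of_hasDerivWithinAt_Iio trivial trivial hq hDm (hH.trans hDpm)
      rw [min_self]
      linarith
    · exact ⟨q, by rw [min_eq_right hq]⟩
  · nlinarith [min_le_right q q₀]

end Tilt

theorem statement11_general (τ : ℝ → ℝ) (hconc : ConcaveOn ℝ Set.univ τ)
    (q₀ c h Dm Dp : ℝ) (hh : 0 ≤ h) (hch : c = h * q₀)
    (hDm : HasDerivWithinAt τ Dm (Set.Iio q₀) q₀)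
    (hDp : HasDerivWithinAt τ Dp (Set.Ioi q₀) q₀) :
    ConcaveOn ℝ Set.univ (fun q => if q ≤ q₀ then τ q + h * q else τ q + c) ∧
    (∀ H : ℝ, Dm + h ≤ H →
      legendreTransform (fun q => if q ≤ q₀ then τ q + h * q else τ q + c) H
        = legendreTransform τ (H - h)) ∧
    (∀ H : ℝ, Dp ≤ H → H ≤ Dm + h →
      legendreTransform (fun q => if q ≤ q₀ then τ q + h * q else τ q + c) H
        = ((q₀ * H - τ q₀ - c : ℝ) : EReal)) ∧
    (∀ H : ℝ, H ≤ Dp →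
      legendreTransform (fun q => if q ≤ q₀ then τ q + h * q else τ q + c) H
        = legendreTransform τ H - (c : EReal)) := by
  subst hch
  have htilt : (fun q => if q ≤ q₀ then τ q + h * q else τ q + h * q₀)
      = fun q => τ q + h * min q q₀ := by
    funext q
    split_ifs with hq
    · rw [min_eq_left hq]
    · rw [min_eq_right (le_of_not_ge hq)]
  rw [htilt]
  exact ⟨hconc.add_mul_min hh q₀,
    fun _ hH => legendreTransform_add_mul_min_of_leftDeriv_add_le hconc hh hDm hDp hH,
    fun _ hH₁ hH₂ => legendreTransform_add_mul_min_of_mem_Icc hconc hDm hDp hH₁ hH₂,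
    fun _ hH => legendreTransform_add_mul_min_of_le_rightDeriv hconc hh hDm hDp hH⟩

/-- Legendre transform of a tilted/shifted concave function: if `τ` is concave,
`c = h q₀` with `c, h ≥ 0`, and `τ̃(q) = τ(q) + hq` for `q ≤ q₀`, `τ̃(q) = τ(q) + c`
for `q > q₀`, then `τ̃` is concave and its Legendre transform is a translate of `τ^*`
on the right, linear in the middle, and `τ^* - c` on the left. -/
theorem statement11 (τ : ℝ → ℝ) (hconc : ConcaveOn ℝ Set.univ τ)
    (q₀ c h Dm Dp : ℝ) (hc : 0 ≤ c) (hh : 0 ≤ h) (hch : c = h * q₀)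
    (hDm : HasDerivWithinAt τ Dm (Set.Iio q₀) q₀)
    (hDp : HasDerivWithinAt τ Dp (Set.Ioi q₀) q₀) :
    ConcaveOn ℝ Set.univ (fun q => if q ≤ q₀ then τ q + h * q else τ q + c) ∧
    (∀ H : ℝ, Dm + h ≤ H →
      legendreTransform (fun q => if q ≤ q₀ then τ q + h * q else τ q + c) H
        = legendreTransform τ (H - h)) ∧
    (∀ H : ℝ, Dp ≤ H → H ≤ Dm + h →
      legendreTransform (fun q => if q ≤ q₀ then τ q + h * q else τ q + c) H
        = ((q₀ * H - τ q₀ - c : ℝ) : EReal)) ∧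
    (∀ H : ℝ, H ≤ Dp →
      legendreTransform (fun q => if q ≤ q₀ then τ q + h * q else τ q + c) H
        = legendreTransform τ H - (c : EReal)) :=
  statement11_general τ hconc q₀ c h Dm Dp hh hch hDm hDp
end

section
/- Fix $d\ge1$, $\eta\in(0,1)$, $\eta'\in(0,\eta]$, $\epsilon\in(0,\eta'/(4d)]$. Suppose for each $j$, and each word $W$ of length $\lfloor\eta' j\rfloor$, we are given a set $T_j(W)$ of extensions of $W$ of length $j$ with $\#T_j(W)\le 2^{d(1-\eta)j}2^{d\epsilon^2 j+d}$, and each $w\in T_j(W)$ independently survives with probability $2^{-d(1-\eta)j}$. Then almost surely, for all $j$ large enough and all $W\in\Sigma_{\lfloor\eta' j\rfloor}$, the number of surviving elements of $T_j(W)$ is at most $2^{\epsilon\eta' j}$. -/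
/-!
Fix `j` and `W`. More than `l` elements of `T_j(W)` survive only if some `l`-subset survives
entirely, which has probability at most `C(n, l) qˡ ≤ (e n q / l)ˡ`, where the expected count
`n q` is at most `2^(d + dε²j)`. Since `dε < η'`, a threshold `l ≈ 2^(εη'j)` makes this at most
`2⁻ˡ`. The union over the `2^(d⌊η'j⌋)` words `W` costs a factor `2^(dη'j)`, which the
exponentially growing `l` absorbs, leaving a bound `2⁻ʲ`; Borel–Cantelli concludes.
-/

open MeasureTheory ProbabilityTheory Filter Finset
open scoped ENNReal

theorem pos_and_mul_sq_lt_of_le_div {d : ℕ} {ε η' : ℝ} (hε0 : 0 < ε) (hε : ε ≤ η' / (4 * d)) :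
    0 < η' ∧ (d : ℝ) * ε ^ 2 < ε * η' := by
  have hd : 0 < (d : ℝ) := by
    refine (Nat.cast_nonneg d).lt_of_ne fun h => ?_
    rw [← h, mul_zero, div_zero] at hε
    linarith
  rw [le_div_iff₀ (by positivity)] at hε
  exact ⟨by nlinarith,
    by nlinarith [mul_le_mul_of_nonneg_left hε hε0.le, mul_pos (mul_pos hε0 hε0) hd]⟩

theorem mul_two_rpow_neg_le {x y b c N : ℝ} (j : ℕ)
    (hN : N ≤ 2 ^ (x * y * j) * 2 ^ (b * j + c)) :
    N * 2 ^ (-x * y * j) ≤ 2 ^ c * (2 ^ b) ^ j :=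
  calc N * 2 ^ (-x * y * j)
        ≤ 2 ^ (x * y * j) * 2 ^ (b * j + c) * 2 ^ (-x * y * j) := by gcongr
    _ = 2 ^ c * (2 ^ b) ^ j := by
      rw [← Real.rpow_mul_natCast zero_le_two, ← Real.rpow_add two_pos, ← Real.rpow_add two_pos,
        ← Real.rpow_add two_pos]
      ring_nf

theorem Nat.cast_choose_mul_pow_le (n l : ℕ) {q : ℝ} (hq : 0 ≤ q) :
    (n.choose l : ℝ) * q ^ l ≤ (Real.exp 1 * (n * q) / l) ^ l := by
  have hfac : (0 : ℝ) < l.factorial := mod_cast l.factorial_pos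
  have hpow : (l : ℝ) ^ l ≤ l.factorial * Real.exp 1 ^ l := by
    have := Real.pow_div_factorial_le_exp l (Nat.cast_nonneg l) l
    rwa [← Real.exp_one_pow, div_le_iff₀ hfac, mul_comm] at this
  rcases l.eq_zero_or_pos with rfl | hl
  · simp
  calc (n.choose l : ℝ) * q ^ l ≤ (n : ℝ) ^ l / l.factorial * q ^ l := by
        gcongr; exact_mod_cast Nat.choose_le_pow_div l n
    _ = (n * q) ^ l / l.factorial := by rw [mul_pow]; ring
    _ ≤ (n * q) ^ l * Real.exp 1 ^ l / l ^ l := by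
        rw [div_le_div_iff₀ hfac (by positivity), mul_assoc, mul_comm (Real.exp 1 ^ l)]
        gcongr
    _ = (Real.exp 1 * (n * q) / l) ^ l := by rw [div_pow, mul_pow]; ring

theorem eventually_mul_pow_le_pow {a σ ρ : ℝ} (hσ : 0 ≤ σ) (hσρ : σ < ρ) :
    ∀ᶠ j : ℕ in atTop, a * σ ^ j ≤ ρ ^ j := by
  filter_upwards [((isLittleO_pow_pow_of_lt_left hσ hσρ).const_mul_left a).bound one_pos]
    with j hj
  rw [one_mul, Real.norm_of_nonneg (pow_nonneg (hσ.trans hσρ.le) j)] at hj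
  exact (Real.le_norm_self _).trans hj

theorem eventually_mul_cast_le_pow (a : ℝ) {ρ : ℝ} (hρ : 1 < ρ) :
    ∀ᶠ j : ℕ in atTop, a * j ≤ ρ ^ j := by
  filter_upwards [((isLittleO_coe_const_pow_of_one_lt (R := ℝ) hρ).const_mul_left a).bound
    one_pos] with j hj
  rw [one_mul, Real.norm_of_nonneg (pow_nonneg (zero_le_one.trans hρ.le) j)] at hj
  exact (Real.le_norm_self _).trans hj

theorem ENNReal.two_pow_mul_inv_two_pow_le {k j L : ℕ} (h : k + j ≤ L) :
    (2 : ℝ≥0∞) ^ k * 2⁻¹ ^ L ≤ 2⁻¹ ^ j :=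
  calc (2 : ℝ≥0∞) ^ k * 2⁻¹ ^ L ≤ 2 ^ k * 2⁻¹ ^ (k + j) := by
        gcongr _ * ?_; exact pow_le_pow_right_of_le_one' (by norm_num) h
    _ = (2 * 2⁻¹) ^ k * 2⁻¹ ^ j := by rw [pow_add, mul_pow]; ring
    _ = 2⁻¹ ^ j := by
        rw [ENNReal.mul_inv_cancel two_ne_zero ENNReal.ofNat_ne_top, one_pow, one_mul]

namespace ProbabilityTheory.iIndepFun

variable {ι Ω : Type*} [MeasurableSpace Ω] {μ : Measure Ω} {p : ι → Ω → Bool}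

theorem measure_le_card_filter_le (hindep : iIndepFun p μ) {q : ℝ≥0∞}
    (S : Finset ι)
    (hS : ∀ i ∈ S, μ {ω | p i ω = true} = q) (l : ℕ) :
    μ {ω | l ≤ #(S.filter fun i => p i ω = true)} ≤ (#S).choose l * q ^ l := by
  classical
  have hsub : {ω | l ≤ #(S.filter fun i => p i ω = true)}
      ⊆ ⋃ A ∈ S.powersetCard l, ⋂ i ∈ A, p i ⁻¹' {true} := by
    intro ω hω
    obtain ⟨A, hAS, hAl⟩ := Finset.exists_subset_card_eq hω
    refine Set.mem_biUnion (mem_powersetCard.2 ⟨hAS.trans (filter_subset _ _), hAl⟩) ?_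
    simp only [Set.mem_iInter]
    exact fun i hi => (mem_filter.1 (hAS hi)).2
  have hA : ∀ A ∈ S.powersetCard l, μ (⋂ i ∈ A, p i ⁻¹' {true}) = q ^ l := by
    intro A hA
    obtain ⟨hAS, hAl⟩ := mem_powersetCard.1 hA
    rw [hindep.measure_inter_preimage_eq_mul A fun _ _ => measurableSet_singleton true,
      show ∏ i ∈ A, μ (p i ⁻¹' {true}) = ∏ _i ∈ A, q from
        prod_congr rfl fun i hi => hS i (hAS hi),
      prod_const, hAl]
  calc _ ≤ ∑ A ∈ S.powersetCard l, μ (⋂ i ∈ A, p i ⁻¹' {true}) :=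
        (measure_mono hsub).trans (measure_biUnion_finset_le _ _)
    _ = _ := by rw [sum_congr rfl hA, sum_const, card_powersetCard, nsmul_eq_mul]

theorem measure_le_card_filter_le_inv_two_pow (hindep : iIndepFun p μ)
    {q : ℝ} (hq : 0 ≤ q) (S : Finset ι) (hS : ∀ i ∈ S, μ {ω | p i ω = true} = ENNReal.ofReal q)
    {l : ℕ} (hl : 2 * Real.exp 1 * (#S * q) ≤ l) :
    μ {ω | l ≤ #(S.filter fun i => p i ω = true)} ≤ 2⁻¹ ^ l := by
  have hmean : Real.exp 1 * (#S * q) / l ≤ 2⁻¹ :=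
    div_le_of_le_mul₀ (Nat.cast_nonneg l) (by norm_num) (by linarith)
  calc _ ≤ (#S).choose l * ENNReal.ofReal q ^ l := hindep.measure_le_card_filter_le S hS l
    _ = ENNReal.ofReal ((#S).choose l * q ^ l) := by
        rw [ENNReal.ofReal_mul (by positivity), ENNReal.ofReal_pow hq, ENNReal.ofReal_natCast]
    _ ≤ ENNReal.ofReal (2⁻¹ ^ l) := by
        gcongr
        exact (Nat.cast_choose_mul_pow_le _ l hq).trans (by gcongr)
    _ = 2⁻¹ ^ l := by rw [ENNReal.ofReal_pow (by norm_num), ENNReal.ofReal_inv_of_pos two_pos,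
        ENNReal.ofReal_ofNat]

end ProbabilityTheory.iIndepFun

theorem measure_exists_length_eq_le {α Ω : Type*} [Fintype α] [MeasurableSpace Ω]
    (μ : Measure Ω) (E : List α → Set Ω) (m : ℕ) {b : ℝ≥0∞}
    (hb : ∀ W : List α, W.length = m → μ (E W) ≤ b) :
    μ {ω | ∃ W : List α, W.length = m ∧ ω ∈ E W} ≤ Fintype.card α ^ m * b := by
  have hunion :
      {ω | ∃ W : List α, W.length = m ∧ ω ∈ E W} = ⋃ v : List.Vector α m, E v.1 := by
    ext ω
    simp only [Set.mem_ofPred_eq, Set.mem_iUnion]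
    exact ⟨fun ⟨W, hW, hω⟩ => ⟨⟨W, hW⟩, hω⟩, fun ⟨v, hω⟩ => ⟨v.1, v.2, hω⟩⟩
  calc _ ≤ ∑ v : List.Vector α m, μ (E v.1) := hunion ▸ measure_iUnion_fintype_le μ _
    _ ≤ ∑ _v : List.Vector α m, b := sum_le_sum fun v _ => hb v.1 v.2
    _ = Fintype.card α ^ m * b := by simp

theorem ae_eventually_notMem_of_eventually_le_pow {Ω : Type*} [MeasurableSpace Ω]
    {μ : Measure Ω} {s : ℕ → Set Ω} {r : ℝ≥0∞} (hr : r < 1)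
    (h : ∀ᶠ j in atTop, μ (s j) ≤ r ^ j) : ∀ᵐ ω ∂μ, ∀ᶠ j in atTop, ω ∉ s j := by
  obtain ⟨J, hJ⟩ := eventually_atTop.1 h
  have hsum : ∑' n, μ (s (n + J)) ≠ ∞ := by
    refine ne_top_of_le_ne_top ?_ (ENNReal.tsum_le_tsum fun n => hJ (n + J) (by omega))
    simp only [pow_add, ENNReal.tsum_mul_right, ENNReal.tsum_geometric]
    exact ENNReal.mul_ne_top (ENNReal.inv_ne_top.2 (tsub_pos_of_lt hr).ne')
      (ENNReal.pow_ne_top (hr.trans ENNReal.one_lt_top).ne)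
  filter_upwards [ae_eventually_notMem hsum] with ω hω
  filter_upwards [(tendsto_sub_atTop_nat J).eventually hω, eventually_ge_atTop J]
    with j hj hJj
  rwa [Nat.sub_add_cancel hJj] at hj

theorem statement13_general (d : ℕ)
    (η η' ε : ℝ)
    (hε0 : 0 < ε) (hε : ε ≤ η' / (4 * d))
    {Ω : Type*} [MeasurableSpace Ω] (P : Measure Ω)
    (p : List (Fin d → Bool) → Ω → Bool)
    (hindep : iIndepFun p P)
    (hbern : ∀ w : List (Fin d → Bool),
      P {ω | p w ω = true} = ENNReal.ofReal ((2:ℝ) ^ (-(d:ℝ) * (1 - η) * (w.length : ℝ))))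
    (T : ℕ → List (Fin d → Bool) → Finset (List (Fin d → Bool)))
    (hT1 : ∀ j W w, w ∈ T j W → W <+: w ∧ w.length = j)
    (hT2 : ∀ j W, ((T j W).card : ℝ)
      ≤ (2:ℝ) ^ ((d:ℝ) * (1 - η) * (j:ℝ)) * (2:ℝ) ^ ((d:ℝ) * ε^2 * (j:ℝ) + (d:ℝ))) :
    ∀ᵐ ω ∂P, ∀ᶠ j : ℕ in atTop, ∀ W : List (Fin d → Bool),
      W.length = ⌊η' * (j:ℝ)⌋₊ →
      ((((T j W).filter (fun w => p w ω = true)).card : ℝ))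
        ≤ (2:ℝ) ^ (ε * η' * (j:ℝ)) := by
  classical
  obtain ⟨hη', hεd⟩ := pos_and_mul_sq_lt_of_le_div hε0 hε
  set ρ := (2 : ℝ) ^ (ε * η')
  set σ := (2 : ℝ) ^ ((d : ℝ) * ε ^ 2)
  have hρ : 1 < ρ := Real.one_lt_rpow one_lt_two (by positivity)
  set l : ℕ → ℕ := fun j => ⌊ρ ^ j⌋₊ + 1
  have hl : ∀ j, ρ ^ j < l j := fun j => by simpa [l] using Nat.lt_floor_add_one (ρ ^ j)
  have hsurv : ∀ j W, 2 * Real.exp 1 * (2 ^ (d : ℝ) * σ ^ j) ≤ l j →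
      P {ω | l j ≤ #((T j W).filter fun w => p w ω = true)} ≤ 2⁻¹ ^ l j := fun j W hj =>
    hindep.measure_le_card_filter_le_inv_two_pow (q := 2 ^ (-(d:ℝ) * (1 - η) * j))
      (by positivity) (T j W) (fun w hw => by rw [hbern, (hT1 j W w hw).2])
      ((mul_le_mul_of_nonneg_left (mul_two_rpow_neg_le j (hT2 j W)) (by positivity)).trans hj)
  have hbad : ∀ᶠ j : ℕ in atTop, P {ω | ∃ W : List (Fin d → Bool), W.length = ⌊η' * j⌋₊ ∧
      l j ≤ #((T j W).filter fun w => p w ω = true)} ≤ 2⁻¹ ^ j := by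
    filter_upwards [eventually_mul_pow_le_pow (a := 2 * Real.exp 1 * 2 ^ (d : ℝ))
        (by positivity) (Real.rpow_lt_rpow_of_exponent_lt one_lt_two hεd),
      eventually_mul_cast_le_pow (d * η' + 1) hρ] with j hσ hj
    have hlen : d * ⌊η' * j⌋₊ + j ≤ l j := by
      have hm := Nat.floor_le (a := η' * j) (by positivity)
      have : (d : ℝ) * ⌊η' * j⌋₊ + j ≤ l j := by nlinarith [hl j]
      exact_mod_cast this
    calc _ ≤ (Fintype.card (Fin d → Bool) : ℝ≥0∞) ^ ⌊η' * j⌋₊ * 2⁻¹ ^ l j :=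
          measure_exists_length_eq_le P _ _ fun W _ => hsurv j W (by linarith [hl j])
      _ ≤ 2⁻¹ ^ j := by simpa [pow_mul] using ENNReal.two_pow_mul_inv_two_pow_le hlen
  filter_upwards [ae_eventually_notMem_of_eventually_le_pow
    (ENNReal.inv_lt_one.2 ENNReal.one_lt_two) hbad] with ω hω
  filter_upwards [hω] with j hj W hW
  have : #((T j W).filter fun w => p w ω = true) < l j := not_le.1 fun h => hj ⟨W, hW, h⟩
  rw [Real.rpow_mul_natCast zero_le_two]
  exact (Nat.le_floor_iff (by positivity)).1 (Nat.lt_succ_iff.1 this)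

/-- Weak redundancy: if `T_j(W)` are sets of extensions of `W` of length `j` with
`#T_j(W) ≤ 2^{d(1-η)j} 2^{dε²j+d}`, and each word of length `j` survives independently
with probability `2^{-d(1-η)j}`, then a.s. for all large `j` and all `W` of length
`⌊η'j⌋`, at most `2^{εη'j}` elements of `T_j(W)` survive. -/
theorem statement13 (d : ℕ) (hd : 1 ≤ d)
    (η η' ε : ℝ) (hη : η ∈ Set.Ioo (0:ℝ) 1) (hη' : η' ∈ Set.Ioc (0:ℝ) η)
    (hε0 : 0 < ε) (hε : ε ≤ η' / (4 * d))
    {Ω : Type*} [MeasurableSpace Ω] (P : Measure Ω) [IsProbabilityMeasure P]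
    (p : List (Fin d → Bool) → Ω → Bool)
    (hmeas : ∀ w, Measurable (p w))
    (hindep : iIndepFun p P)
    (hbern : ∀ w : List (Fin d → Bool),
      P {ω | p w ω = true} = ENNReal.ofReal ((2:ℝ) ^ (-(d:ℝ) * (1 - η) * (w.length : ℝ))))
    (T : ℕ → List (Fin d → Bool) → Finset (List (Fin d → Bool)))
    (hT1 : ∀ j W w, w ∈ T j W → W <+: w ∧ w.length = j)
    (hT2 : ∀ j W, ((T j W).card : ℝ)
      ≤ (2:ℝ) ^ ((d:ℝ) * (1 - η) * (j:ℝ)) * (2:ℝ) ^ ((d:ℝ) * ε^2 * (j:ℝ) + (d:ℝ))) :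
    ∀ᵐ ω ∂P, ∀ᶠ j : ℕ in atTop, ∀ W : List (Fin d → Bool),
      W.length = ⌊η' * (j:ℝ)⌋₊ →
      ((((T j W).filter (fun w => p w ω = true)).card : ℝ))
        ≤ (2:ℝ) ^ (ε * η' * (j:ℝ)) :=
  statement13_general d η η' ε hε0 hε P p hindep hbern T hT1 hT2
end

section
/- Fix $d\ge1$, $\eta\in(0,1)$, $q>0$ and a quasi-Bernoulli capacity $\mu$ with lower $L^q$-spectrum $\tau_\mu$ satisfying $\tau_\mu(q)+d(1-\eta)>0$. Let $(p_w)$ be independent Bernoulli with parameter $2^{-d(1-\eta)|w|}$ and define $M(I_W)=\max\{\mu(I_{Wv}): v\in\Sigma^*, p_{Wv}=1\}$ (assumed well-defined). Then there is a constant $C'_q$ such that for all $J$, $\mathbb{E}\big(\sum_{W\in\Sigma_J} M(I_W)^q\big)\le C'_q\, 2^{-Jd(1-\eta)}\sum_{W\in\Sigma_J}\mu(I_W)^q$. Consequently, almost surely $\liminf_{J\to\infty}-\tfrac1J\log_2\sum_{W\in\Sigma_J}M(I_W)^q\ge \tau_\mu(q)+d(1-\eta)$. -/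
/-!
`M(I_W)^q` is at most the sum of `μ(I_{Wv})^q` over the retained descendants `Wv`. By the
quasi-Bernoulli property the expectation of that sum is at most
`C^q μ(I_W)^q 2^{-d(1-η)J} ∑_k 2^{-d(1-η)k} ∑_{|v|=k} μ(I_v)^q`, and the series converges because
`∑_{|v|=k} μ(I_v)^q = O(2^{-kt})` for every `t < τ_μ(q)` and `τ_μ(q) + d(1-η) > 0`.
For the almost sure bound, Markov's inequality and the first Borel–Cantelli lemma give
`∑_W M(I_W)^q ≤ 2^{-Ja}` eventually, for each `a < τ_μ(q) + d(1-η)`. The second Borel–Cantelli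
lemma makes infinitely many words retained, so these sums are positive and their logarithms are
not junk values.
-/

open MeasureTheory ProbabilityTheory Filter Topology Set
open scoped ENNReal

theorem le_neg_one_div_mul_logb_iff {J T t : ℝ} (hJ : 0 < J) (hT : 0 < T) :
    t ≤ -(1 / J) * Real.logb 2 T ↔ T ≤ 2 ^ (-J * t) := by
  rw [← Real.logb_le_iff_le_rpow one_lt_two hT, show -(1 / J) * Real.logb 2 T
    = -Real.logb 2 T / J by ring, le_div_iff₀ hJ]
  constructor <;> intro h <;> linarith

theorem eventually_le_two_rpow_of_lt_liminf {S : ℕ → ℝ} (hS : ∀ J, 0 < S J) {t : ℝ}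
    (ht : (t : EReal) < liminf (fun J : ℕ ↦ ((-(1 / (J : ℝ)) * Real.logb 2 (S J) : ℝ) : EReal))
      atTop) :
    ∀ᶠ J : ℕ in atTop, S J ≤ 2 ^ (-(J : ℝ) * t) := by
  filter_upwards [eventually_lt_of_lt_liminf ht, eventually_gt_atTop 0] with J hJ hJ0
  exact (le_neg_one_div_mul_logb_iff (Nat.cast_pos.2 hJ0) (hS J)).1
    (EReal.coe_lt_coe_iff.1 hJ).le

theorem exists_le_mul_two_rpow_of_lt_liminf {S : ℕ → ℝ} (hS : ∀ J, 0 < S J) {t : ℝ}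
    (ht : (t : EReal) < liminf (fun J : ℕ ↦ ((-(1 / (J : ℝ)) * Real.logb 2 (S J) : ℝ) : EReal))
      atTop) :
    ∃ A : ℝ, 0 < A ∧ ∀ J : ℕ, S J ≤ A * 2 ^ (-(J : ℝ) * t) := by
  have hbdd : BddAbove (range fun J : ℕ ↦ S J / 2 ^ (-(J : ℝ) * t)) := by
    refine IsBoundedUnder.bddAbove_range (isBoundedUnder_of_eventually_le (a := 1) ?_)
    filter_upwards [eventually_le_two_rpow_of_lt_liminf hS ht] with J hJ
    exact div_le_one_of_le₀ hJ (by positivity)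
  obtain ⟨A, hA⟩ := hbdd
  have hle : ∀ J : ℕ, S J ≤ A * 2 ^ (-(J : ℝ) * t) :=
    fun J ↦ (div_le_iff₀ (by positivity)).1 (hA ⟨J, rfl⟩)
  exact ⟨A, (hS 0).trans_le (by simpa using hle 0), hle⟩

theorem coe_le_liminf_of_tendsto_of_eventually_le {T : ℕ → ℝ} (hT : ∀ J, 0 < T J)
    {t : ℕ → ℝ} {a : ℝ} (ht : Tendsto t atTop (𝓝 a))
    (h : ∀ m, ∀ᶠ J : ℕ in atTop, T J ≤ 2 ^ (-(J : ℝ) * t m)) :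
    (a : EReal) ≤ liminf (fun J : ℕ ↦ ((-(1 / (J : ℝ)) * Real.logb 2 (T J) : ℝ) : EReal))
      atTop := by
  refine le_of_tendsto' (EReal.tendsto_coe.2 ht) fun m ↦ le_liminf_of_le (by isBoundedDefault) ?_
  filter_upwards [h m, eventually_gt_atTop 0] with J hJ hJ0
  exact EReal.coe_le_coe_iff.2 <| (le_neg_one_div_mul_logb_iff (Nat.cast_pos.2 hJ0) (hT J)).2 hJ

theorem ae_eventually_lt_of_lintegral_le_geometric {Ω : Type*} [MeasurableSpace Ω]
    {P : Measure Ω} {X : ℕ → Ω → ℝ≥0∞} (hX : ∀ J, AEMeasurable (X J) P) {c r : ℝ} (hc : 0 ≤ c)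
    (hr₀ : 0 ≤ r) (hr₁ : r < 1) {e : ℕ → ℝ} (he : ∀ J, 0 < e J)
    (h : ∀ J, ∫⁻ ω, X J ω ∂P ≤ ENNReal.ofReal (c * r ^ J * e J)) :
    ∀ᵐ ω ∂P, ∀ᶠ J in atTop, X J ω < ENNReal.ofReal (e J) := by
  have hmarkov : ∀ J,
      P {ω | ENNReal.ofReal (e J) ≤ X J ω} ≤ ENNReal.ofReal c * ENNReal.ofReal r ^ J := by
    intro J
    have he' : ENNReal.ofReal (e J) ≠ 0 := (ENNReal.ofReal_pos.2 (he J)).ne'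
    calc P {ω | ENNReal.ofReal (e J) ≤ X J ω}
        ≤ (∫⁻ ω, X J ω ∂P) / ENNReal.ofReal (e J) :=
          meas_ge_le_lintegral_div (hX J) he' ENNReal.ofReal_ne_top
      _ ≤ ENNReal.ofReal c * ENNReal.ofReal r ^ J * ENNReal.ofReal (e J)
            / ENNReal.ofReal (e J) := by
          gcongr
          rw [← ENNReal.ofReal_pow hr₀, ← ENNReal.ofReal_mul hc,
            ← ENNReal.ofReal_mul (by positivity)]
          exact h J
      _ = ENNReal.ofReal c * ENNReal.ofReal r ^ J :=
          ENNReal.mul_div_cancel_right he' ENNReal.ofReal_ne_top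
  have hsum : ∑' J, P {ω | ENNReal.ofReal (e J) ≤ X J ω} ≠ ∞ := by
    refine ne_top_of_le_ne_top ?_ (ENNReal.tsum_le_tsum hmarkov)
    rw [ENNReal.tsum_mul_left, ENNReal.tsum_geometric]
    exact ENNReal.mul_ne_top ENNReal.ofReal_ne_top
      (ENNReal.inv_ne_top.2 (tsub_pos_of_lt (ENNReal.ofReal_lt_one.2 hr₁)).ne')
  filter_upwards [ae_eventually_notMem hsum] with ω hω
  filter_upwards [hω] with J hJ
  simpa using hJ

theorem ae_infinite_setOf_of_iIndepFun {Ω ι : Type*} [MeasurableSpace Ω] [Countable ι]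
    [Infinite ι] {P : Measure Ω} {p : ι → Ω → Bool} (hmeas : ∀ i, Measurable (p i))
    (hindep : iIndepFun p P) (hsum : ∑' i, P {ω | p i ω = true} = ∞) :
    ∀ᵐ ω ∂P, {i | p i ω = true}.Infinite := by
  have := hindep.isProbabilityMeasure
  have : Encodable ι := Encodable.ofCountable ι
  have : Denumerable ι := Denumerable.ofEncodableOfInfinite ι
  let e : ℕ ≃ ι := (Denumerable.eqv ι).symm
  let s : ι → Set Ω := fun i ↦ {ω | p i ω = true}
  have hsm : ∀ i, MeasurableSet (s i) := fun i ↦ hmeas i (measurableSet_singleton true)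
  have hs : iIndepSet s P := (iIndepSet_iff_meas_biInter hsm).2 fun S ↦
    hindep.meas_biInter fun i _ ↦ ⟨{true}, measurableSet_singleton true, rfl⟩
  have hlimsup : P (limsup (fun n ↦ s (e n)) atTop) = 1 :=
    measure_limsup_eq_one (fun n ↦ hsm (e n)) (hs.precomp e.injective)
      (by rwa [e.tsum_eq fun i ↦ P (s i)])
  have hae : ∀ᵐ ω ∂P, ω ∈ limsup (fun n ↦ s (e n)) atTop := by
    rw [ae_mem_iff_measure_eq
      (MeasurableSet.measurableSet_limsup fun n ↦ hsm (e n)).nullMeasurableSet, hlimsup,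
      measure_univ]
  filter_upwards [hae] with ω hω
  rw [mem_limsup_iff_frequently_mem, Nat.frequently_atTop_iff_infinite] at hω
  exact (hω.image e.injective.injOn).mono (image_subset_iff.2 fun n hn ↦ hn)

theorem ae_eventually_lt_of_lintegral_le_two_rpow {Ω : Type*} [MeasurableSpace Ω]
    {P : Measure Ω} {X : ℕ → Ω → ℝ≥0∞} (hX : ∀ J, AEMeasurable (X J) P) {S : ℕ → ℝ}
    {c s a t A : ℝ} (hc : 0 ≤ c) (hA₀ : 0 ≤ A) (hA : ∀ J : ℕ, S J ≤ A * 2 ^ (-(J : ℝ) * t))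
    (hst : s + a < t) (h : ∀ J : ℕ, ∫⁻ ω, X J ω ∂P ≤ ENNReal.ofReal (c * 2 ^ (s * J) * S J)) :
    ∀ᵐ ω ∂P, ∀ᶠ J in atTop, X J ω < ENNReal.ofReal (2 ^ (-(J : ℝ) * a)) := by
  refine ae_eventually_lt_of_lintegral_le_geometric hX (mul_nonneg hc hA₀) (by positivity)
    (Real.rpow_lt_one_of_one_lt_of_neg one_lt_two (by linarith : s + a - t < 0))
    (fun J ↦ by positivity) fun J ↦ (h J).trans (ENNReal.ofReal_le_ofReal ?_)
  calc c * 2 ^ (s * J) * S J ≤ c * 2 ^ (s * J) * (A * 2 ^ (-(J : ℝ) * t)) := by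
        gcongr; exact hA J
    _ = c * A * (2 ^ (s * J) * 2 ^ (-(J : ℝ) * t)) := by ring
    _ = c * A * (2 ^ ((s + a - t) * J) * 2 ^ (-(J : ℝ) * a)) := by
        rw [← Real.rpow_add two_pos, ← Real.rpow_add two_pos]
        ring_nf
    _ = c * A * (2 ^ (s + a - t)) ^ J * 2 ^ (-(J : ℝ) * a) := by
        rw [Real.rpow_mul_natCast zero_le_two]
        ring

theorem ofReal_sSup_rpow_le {S : Set ℝ} (hS : ∀ x ∈ S, 0 ≤ x) {q : ℝ} (hq : 0 < q)
    {R : ℝ≥0∞} (h : ∀ x ∈ S, ENNReal.ofReal (x ^ q) ≤ R) : ENNReal.ofReal (sSup S ^ q) ≤ R := by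
  rcases eq_or_ne R ∞ with rfl | hR
  · exact le_top
  have hR' : 0 ≤ R.toReal ^ q⁻¹ := by positivity
  have hsup : sSup S ≤ R.toReal ^ q⁻¹ := Real.sSup_le (fun x hx ↦
    (Real.le_rpow_inv_iff_of_pos (hS x hx) ENNReal.toReal_nonneg hq).2
      ((ENNReal.ofReal_le_iff_le_toReal hR).1 (h x hx))) hR'
  exact ENNReal.ofReal_le_of_le_toReal <|
    (Real.le_rpow_inv_iff_of_pos (Real.sSup_nonneg hS) ENNReal.toReal_nonneg hq).1 hsup

theorem tsum_list_eq_tsum_sum_ofFn {α : Type*} [Fintype α] (F : List α → ℝ≥0∞) :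
    ∑' v : List α, F v = ∑' n : ℕ, ∑ f : Fin n → α, F (List.ofFn f) := by
  rw [← List.equivSigmaTuple.symm.tsum_eq F, ENNReal.tsum_sigma']
  simp_rw [tsum_fintype]
  rfl

noncomputable section Words

variable {α Ω : Type*}

def retainedSup (μ : List α → ℝ) (p : List α → Ω → Bool) (W : List α) (ω : Ω) : ℝ :=
  sSup {x | ∃ v, p (W ++ v) ω = true ∧ x = μ (W ++ v)}

/-- A measurable majorant of `retainedSup μ p W ω ^ q` whose expectation can be computed term by
term. -/
def retainedPowSum (μ : List α → ℝ) (p : List α → Ω → Bool) (q : ℝ) (W : List α) (ω : Ω) :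
    ℝ≥0∞ :=
  ∑' v, {ω | p (W ++ v) ω = true}.indicator (fun _ ↦ ENNReal.ofReal (μ (W ++ v) ^ q)) ω

variable {μ : List α → ℝ} {p : List α → Ω → Bool}

theorem retainedSup_nonneg (hμ : ∀ w, 0 ≤ μ w) (W : List α) (ω : Ω) :
    0 ≤ retainedSup μ p W ω :=
  Real.sSup_nonneg <| by rintro x ⟨v, -, rfl⟩; exact hμ _

theorem le_retainedSup (hcap : ∀ w v, μ (w ++ v) ≤ μ w) {W v : List α} {ω : Ω}
    (hv : p (W ++ v) ω = true) : μ (W ++ v) ≤ retainedSup μ p W ω :=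
  le_csSup ⟨μ W, by rintro x ⟨u, -, rfl⟩; exact hcap W u⟩ ⟨v, hv, rfl⟩

theorem ofReal_retainedSup_rpow_le (hμ : ∀ w, 0 ≤ μ w) {q : ℝ} (hq : 0 < q) (W : List α)
    (ω : Ω) : ENNReal.ofReal (retainedSup μ p W ω ^ q) ≤ retainedPowSum μ p q W ω := by
  refine ofReal_sSup_rpow_le (by rintro x ⟨v, -, rfl⟩; exact hμ _) hq ?_
  rintro x ⟨v, hv, rfl⟩
  calc ENNReal.ofReal (μ (W ++ v) ^ q)
      = {ω | p (W ++ v) ω = true}.indicator (fun _ ↦ ENNReal.ofReal (μ (W ++ v) ^ q)) ω :=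
        (indicator_of_mem (show ω ∈ {ω | p (W ++ v) ω = true} from hv) fun _ ↦ _).symm
    _ ≤ retainedPowSum μ p q W ω := ENNReal.le_tsum v

theorem ofReal_sum_retainedSup_rpow_le [Fintype α] (hμ : ∀ w, 0 ≤ μ w) {q : ℝ} (hq : 0 < q)
    (J : ℕ) (ω : Ω) :
    ENNReal.ofReal (∑ f : Fin J → α, retainedSup μ p (List.ofFn f) ω ^ q)
      ≤ ∑ f : Fin J → α, retainedPowSum μ p q (List.ofFn f) ω := by
  rw [ENNReal.ofReal_sum_of_nonneg fun f _ ↦ Real.rpow_nonneg (retainedSup_nonneg hμ _ _) q]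
  exact Finset.sum_le_sum fun f _ ↦ ofReal_retainedSup_rpow_le hμ hq _ _

theorem sum_retainedSup_rpow_pos [Fintype α] (hμ : ∀ w, 0 < μ w)
    (hcap : ∀ w v, μ (w ++ v) ≤ μ w) {ω : Ω} (hinf : {w | p w ω = true}.Infinite) (q : ℝ)
    (J : ℕ) : 0 < ∑ f : Fin J → α, retainedSup μ p (List.ofFn f) ω ^ q := by
  obtain ⟨w, hw, hJw⟩ : ∃ w, p w ω = true ∧ J ≤ w.length := by
    by_contra! h
    exact hinf ((List.finite_length_lt α J).subset h)
  have hlen : (w.take J).length = J := List.length_take_of_le hJw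
  obtain ⟨f, hf⟩ : ∃ f : Fin J → α, List.ofFn f = w.take J :=
    ⟨_, (List.ofFn_congr hlen _).symm.trans (List.ofFn_get _)⟩
  have hle : μ w ≤ retainedSup μ p (List.ofFn f) ω := by
    rw [← List.take_append_drop J w] at hw ⊢
    rw [hf]
    exact le_retainedSup hcap hw
  refine Finset.sum_pos' (fun g _ ↦ Real.rpow_nonneg (retainedSup_nonneg (fun w ↦ (hμ w).le) _ _) q)
    ⟨f, Finset.mem_univ f, Real.rpow_pos_of_pos ((hμ w).trans_le hle) q⟩

variable [MeasurableSpace Ω] {P : Measure Ω}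

theorem measurable_retainedPowSum [Countable α] (hmeas : ∀ w, Measurable (p w)) (q : ℝ)
    (W : List α) :
    Measurable (retainedPowSum μ p q W) :=
  .tsum fun _ ↦ measurable_const.indicator (hmeas _ (measurableSet_singleton true))

theorem lintegral_retainedPowSum [Countable α] (hmeas : ∀ w, Measurable (p w)) (q : ℝ)
    (W : List α) :
    ∫⁻ ω, retainedPowSum μ p q W ω ∂P
      = ∑' v, ENNReal.ofReal (μ (W ++ v) ^ q) * P {ω | p (W ++ v) ω = true} := by
  have hset : ∀ w, MeasurableSet {ω | p w ω = true} :=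
    fun w ↦ hmeas w (measurableSet_singleton true)
  unfold retainedPowSum
  rw [lintegral_tsum fun v ↦ (measurable_const.indicator (hset _)).aemeasurable]
  simp_rw [lintegral_indicator_const (hset _)]

theorem lintegral_retainedPowSum_le [Countable α] (hmeas : ∀ w, Measurable (p w)) {s : ℝ}
    (hbern : ∀ w, P {ω | p w ω = true} = ENNReal.ofReal (2 ^ (s * w.length)))
    (hμ : ∀ w, 0 ≤ μ w) {C q : ℝ} (hC : 0 ≤ C) (hq : 0 ≤ q)
    (hqb : ∀ w v, μ (w ++ v) ≤ C * (μ w * μ v)) (W : List α) :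
    ∫⁻ ω, retainedPowSum μ p q W ω ∂P ≤
      ENNReal.ofReal (C ^ q * μ W ^ q * 2 ^ (s * W.length)) *
        ∑' v, ENNReal.ofReal (μ v ^ q * 2 ^ (s * v.length)) := by
  rw [lintegral_retainedPowSum hmeas, ← ENNReal.tsum_mul_left]
  refine ENNReal.tsum_le_tsum fun v ↦ ?_
  have hpow : μ (W ++ v) ^ q ≤ C ^ q * μ W ^ q * μ v ^ q := by
    rw [← Real.mul_rpow hC (hμ W), ← Real.mul_rpow (mul_nonneg hC (hμ W)) (hμ v), mul_assoc]
    exact Real.rpow_le_rpow (hμ _) (hqb W v) hq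
  have hweight : (2 : ℝ) ^ (s * (W ++ v).length)
      = 2 ^ (s * W.length) * 2 ^ (s * v.length) := by
    rw [← Real.rpow_add two_pos, List.length_append, Nat.cast_add, mul_add]
  rw [hbern, ← ENNReal.ofReal_mul (Real.rpow_nonneg (hμ _) q),
    ← ENNReal.ofReal_mul (by have := hμ W; positivity),
    hweight]
  refine ENNReal.ofReal_le_ofReal ?_
  calc μ (W ++ v) ^ q * (2 ^ (s * W.length) * 2 ^ (s * v.length))
      ≤ C ^ q * μ W ^ q * μ v ^ q * (2 ^ (s * W.length) * 2 ^ (s * v.length)) := by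
        gcongr
    _ = _ := by ring


theorem lintegral_sum_retainedPowSum_le [Fintype α] (hmeas : ∀ w, Measurable (p w)) {s : ℝ}
    (hbern : ∀ w, P {ω | p w ω = true} = ENNReal.ofReal (2 ^ (s * w.length)))
    (hμ : ∀ w, 0 ≤ μ w) {C q : ℝ} (hC : 0 ≤ C) (hq : 0 ≤ q)
    (hqb : ∀ w v, μ (w ++ v) ≤ C * (μ w * μ v)) (J : ℕ) :
    ∫⁻ ω, ∑ f : Fin J → α, retainedPowSum μ p q (List.ofFn f) ω ∂P ≤
      ENNReal.ofReal (C ^ q * 2 ^ (s * J) * ∑ f : Fin J → α, μ (List.ofFn f) ^ q) *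
        ∑' v, ENNReal.ofReal (μ v ^ q * 2 ^ (s * v.length)) := by
  rw [lintegral_finsetSum _ fun f _ ↦ measurable_retainedPowSum hmeas q _, Finset.mul_sum,
    ENNReal.ofReal_sum_of_nonneg fun f _ ↦ by have := hμ (List.ofFn f); positivity,
    Finset.sum_mul]
  refine Finset.sum_le_sum fun f _ ↦ ?_
  refine (lintegral_retainedPowSum_le hmeas hbern hμ hC hq hqb (List.ofFn f)).trans_eq ?_
  rw [List.length_ofFn, mul_right_comm (C ^ q)]

theorem tsum_ofReal_rpow_mul_two_rpow_ne_top [Fintype α] (hμ : ∀ w, 0 ≤ μ w) {q s t A : ℝ}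
    (hst : s < t) (hA : ∀ J : ℕ, ∑ f : Fin J → α, μ (List.ofFn f) ^ q ≤ A * 2 ^ (-(J : ℝ) * t)) :
    ∑' v : List α, ENNReal.ofReal (μ v ^ q * 2 ^ (s * v.length)) ≠ ∞ := by
  have hlevel : ∀ J : ℕ,
      ∑ f : Fin J → α, ENNReal.ofReal (μ (List.ofFn f) ^ q * 2 ^ (s * (List.ofFn f).length))
        ≤ ENNReal.ofReal A * ENNReal.ofReal (2 ^ (s - t)) ^ J := by
    intro J
    simp only [List.length_ofFn]
    rw [← ENNReal.ofReal_sum_of_nonneg fun f _ ↦ by have := hμ (List.ofFn f); positivity,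
      ← Finset.sum_mul, ← ENNReal.ofReal_pow (by positivity), ← Real.rpow_natCast,
      ← Real.rpow_mul zero_le_two, ← ENNReal.ofReal_mul' (by positivity)]
    refine ENNReal.ofReal_le_ofReal ?_
    calc (∑ f : Fin J → α, μ (List.ofFn f) ^ q) * 2 ^ (s * J)
        ≤ A * 2 ^ (-(J : ℝ) * t) * 2 ^ (s * J) := by gcongr; exact hA J
      _ = A * 2 ^ ((s - t) * J) := by
        rw [mul_assoc, ← Real.rpow_add two_pos]
        ring_nf
  rw [tsum_list_eq_tsum_sum_ofFn]
  refine ne_top_of_le_ne_top ?_ (ENNReal.tsum_le_tsum hlevel)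
  rw [ENNReal.tsum_mul_left, ENNReal.tsum_geometric]
  exact ENNReal.mul_ne_top ENNReal.ofReal_ne_top (ENNReal.inv_ne_top.2 (tsub_pos_of_lt
    (ENNReal.ofReal_lt_one.2 (Real.rpow_lt_one_of_one_lt_of_neg one_lt_two (by linarith)))).ne')

theorem tsum_measure_setOf_eq_true_eq_top [Fintype α] {s : ℝ}
    (hbern : ∀ w, P {ω | p w ω = true} = ENNReal.ofReal (2 ^ (s * w.length)))
    (hs : 1 ≤ Fintype.card α * (2 : ℝ) ^ s) : ∑' w, P {ω | p w ω = true} = ∞ := by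
  have hlevel : ∀ J : ℕ, 1 ≤ ∑ f : Fin J → α, P {ω | p (List.ofFn f) ω = true} := by
    intro J
    simp only [hbern, List.length_ofFn, Finset.sum_const, Finset.card_univ, Fintype.card_fun,
      Fintype.card_fin, nsmul_eq_mul]
    rw [← ENNReal.ofReal_natCast, ← ENNReal.ofReal_mul (by positivity), Nat.cast_pow,
      Real.rpow_mul_natCast zero_le_two, ← mul_pow]
    exact ENNReal.one_le_ofReal.2 (one_le_pow₀ hs)
  rw [tsum_list_eq_tsum_sum_ofFn, ← top_le_iff,
    ← ENNReal.tsum_const_eq_top_of_ne_zero (α := ℕ) one_ne_zero]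
  exact ENNReal.tsum_le_tsum hlevel

theorem exists_lintegral_sum_retainedPowSum_le [Fintype α] (hmeas : ∀ w, Measurable (p w))
    {s : ℝ} (hbern : ∀ w, P {ω | p w ω = true} = ENNReal.ofReal (2 ^ (s * w.length)))
    (hμ : ∀ w, 0 < μ w) {C q t A : ℝ} (hC : 0 < C) (hq : 0 ≤ q)
    (hqb : ∀ w v, μ (w ++ v) ≤ C * (μ w * μ v)) (hst : s < t)
    (hA : ∀ J : ℕ, ∑ f : Fin J → α, μ (List.ofFn f) ^ q ≤ A * 2 ^ (-(J : ℝ) * t)) :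
    ∃ C' : ℝ, 0 < C' ∧ ∀ J : ℕ,
      ∫⁻ ω, ∑ f : Fin J → α, retainedPowSum μ p q (List.ofFn f) ω ∂P
        ≤ ENNReal.ofReal (C' * 2 ^ (s * J) * ∑ f : Fin J → α, μ (List.ofFn f) ^ q) := by
  have hμ₀ : ∀ w, 0 ≤ μ w := fun w ↦ (hμ w).le
  set K := ∑' v : List α, ENNReal.ofReal (μ v ^ q * 2 ^ (s * v.length))
  have hK : K ≠ ∞ := tsum_ofReal_rpow_mul_two_rpow_ne_top hμ₀ hst hA
  have hK₀ : K ≠ 0 :=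
    ((ENNReal.ofReal_pos.2 (by simpa using Real.rpow_pos_of_pos (hμ []) q)).trans_le
      (ENNReal.le_tsum [])).ne'
  refine ⟨C ^ q * K.toReal, mul_pos (Real.rpow_pos_of_pos hC q) (ENNReal.toReal_pos hK₀ hK),
    fun J ↦ (lintegral_sum_retainedPowSum_le hmeas hbern hμ₀ hC.le hq hqb J).trans_eq ?_⟩
  have hS : 0 ≤ ∑ f : Fin J → α, μ (List.ofFn f) ^ q :=
    Finset.sum_nonneg fun f _ ↦ Real.rpow_nonneg (hμ₀ _) q
  rw [show C ^ q * K.toReal * 2 ^ (s * J) * ∑ f : Fin J → α, μ (List.ofFn f) ^ q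
      = C ^ q * 2 ^ (s * J) * (∑ f : Fin J → α, μ (List.ofFn f) ^ q) * K.toReal by ring,
    ENNReal.ofReal_mul (mul_nonneg (by positivity) hS), ENNReal.ofReal_toReal hK]

theorem ae_eventually_sum_retainedSup_rpow_le [Fintype α] (hmeas : ∀ w, Measurable (p w))
    (hμ : ∀ w, 0 ≤ μ w) {q s a t A C' : ℝ} (hq : 0 < q) (hC' : 0 ≤ C')
    (hmean : ∀ J : ℕ, ∫⁻ ω, ∑ f : Fin J → α, retainedPowSum μ p q (List.ofFn f) ω ∂P
      ≤ ENNReal.ofReal (C' * 2 ^ (s * J) * ∑ f : Fin J → α, μ (List.ofFn f) ^ q))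
    (hA₀ : 0 ≤ A) (hA : ∀ J : ℕ, ∑ f : Fin J → α, μ (List.ofFn f) ^ q ≤ A * 2 ^ (-(J : ℝ) * t))
    (hst : s + a < t) :
    ∀ᵐ ω ∂P, ∀ᶠ J in atTop,
      ∑ f : Fin J → α, retainedSup μ p (List.ofFn f) ω ^ q ≤ 2 ^ (-(J : ℝ) * a) := by
  have hX : ∀ J, AEMeasurable (fun ω ↦ ∑ f : Fin J → α, retainedPowSum μ p q (List.ofFn f) ω) P :=
    fun J ↦ (Finset.measurable_sum _ fun f _ ↦ measurable_retainedPowSum hmeas q _).aemeasurable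
  filter_upwards [ae_eventually_lt_of_lintegral_le_two_rpow hX hC' hA₀ hA hst hmean] with ω hω
  filter_upwards [hω] with J hJ
  exact ((ENNReal.ofReal_lt_ofReal_iff (by positivity)).1
    ((ofReal_sum_retainedSup_rpow_le hμ hq J ω).trans_lt hJ)).le

end Words

theorem statement18_general (d : ℕ) (η q : ℝ) (hη : η ∈ Set.Ioo (0:ℝ) 1)
    (hq : 0 < q)
    {Ω : Type*} [MeasurableSpace Ω] (P : Measure Ω)
    (μ : List (Fin d → Bool) → ℝ) (C : ℝ) (hC : 1 ≤ C)
    (hpos : ∀ w, 0 < μ w)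
    (hcap : ∀ w v : List (Fin d → Bool), μ (w ++ v) ≤ μ w)
    (hqb : ∀ w v : List (Fin d → Bool),
      C⁻¹ * (μ w * μ v) ≤ μ (w ++ v) ∧ μ (w ++ v) ≤ C * (μ w * μ v))
    (τq : ℝ)
    (hτ : (τq : EReal) = Filter.liminf (fun J : ℕ =>
      ((-(1/(J:ℝ)) * Real.logb 2
        (∑ f : Fin J → (Fin d → Bool), μ (List.ofFn f) ^ q) : ℝ) : EReal)) Filter.atTop)
    (hτpos : 0 < τq + (d:ℝ) * (1 - η))
    (p : List (Fin d → Bool) → Ω → Bool)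
    (hmeas : ∀ w, Measurable (p w))
    (hindep : iIndepFun p P)
    (hbern : ∀ w : List (Fin d → Bool),
      P {ω | p w ω = true} = ENNReal.ofReal ((2:ℝ) ^ (-(d:ℝ) * (1 - η) * (w.length : ℝ))))
    (M : List (Fin d → Bool) → Ω → ℝ)
    (hM : ∀ W ω, M W ω
      = sSup {x : ℝ | ∃ v : List (Fin d → Bool), p (W ++ v) ω = true ∧ x = μ (W ++ v)}) :
    (∃ C' : ℝ, 0 < C' ∧ ∀ J : ℕ,
      ∫⁻ ω, ENNReal.ofReal
          (∑ f : Fin J → (Fin d → Bool), M (List.ofFn f) ω ^ q) ∂P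
        ≤ ENNReal.ofReal (C' * (2:ℝ) ^ (-(J:ℝ) * (d:ℝ) * (1 - η))
            * ∑ f : Fin J → (Fin d → Bool), μ (List.ofFn f) ^ q)) ∧
    (∀ᵐ ω ∂P, ((τq + (d:ℝ) * (1 - η) : ℝ) : EReal)
      ≤ Filter.liminf (fun J : ℕ =>
          ((-(1/(J:ℝ)) * Real.logb 2
            (∑ f : Fin J → (Fin d → Bool), M (List.ofFn f) ω ^ q) : ℝ) : EReal))
          Filter.atTop) := by
  obtain rfl : M = retainedSup μ p := funext₂ hM
  set s : ℝ := -(d : ℝ) * (1 - η)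
  have hlevel : ∀ t < τq, ∃ A : ℝ, 0 < A ∧
      ∀ J : ℕ, ∑ f : Fin J → (Fin d → Bool), μ (List.ofFn f) ^ q ≤ A * 2 ^ (-(J : ℝ) * t) :=
    fun t ht ↦ exists_le_mul_two_rpow_of_lt_liminf
      (fun J ↦ Finset.sum_pos (fun f _ ↦ Real.rpow_pos_of_pos (hpos _) q) Finset.univ_nonempty)
      ((EReal.coe_lt_coe_iff.2 ht).trans_eq hτ)
  obtain ⟨A, -, hA⟩ := hlevel ((s + τq) / 2) (by linarith)
  obtain ⟨C', hC', hmean⟩ := exists_lintegral_sum_retainedPowSum_le hmeas hbern hpos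
    (one_pos.trans_le hC) hq.le (fun w v ↦ (hqb w v).2) (by linarith) hA
  refine ⟨⟨C', hC', fun J ↦ ?_⟩, ?_⟩
  · rw [show -(J : ℝ) * d * (1 - η) = s * J by ring]
    exact (lintegral_mono (ofReal_sum_retainedSup_rpow_le (fun w ↦ (hpos w).le) hq J)).trans
      (hmean J)
  have hdecay : ∀ m : ℕ, ∀ᵐ ω ∂P, ∀ᶠ J in atTop,
      ∑ f : Fin J → (Fin d → Bool), retainedSup μ p (List.ofFn f) ω ^ q
        ≤ 2 ^ (-(J : ℝ) * (τq + d * (1 - η) - 1 / (m + 1))) := fun m ↦ by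
    have hm : (0 : ℝ) < 1 / (m + 1) := by positivity
    obtain ⟨A, hA₀, hA⟩ := hlevel (τq - 1 / (m + 1) / 2) (by linarith)
    exact ae_eventually_sum_retainedSup_rpow_le hmeas (fun w ↦ (hpos w).le) hq hC'.le hmean
      hA₀.le hA (by linarith)
  have hcard : 1 ≤ (Fintype.card (Fin d → Bool) : ℝ) * 2 ^ s := by
    rw [show (Fintype.card (Fin d → Bool) : ℝ) = 2 ^ (d : ℝ) by simp, ← Real.rpow_add two_pos]
    exact Real.one_le_rpow one_le_two (by nlinarith [hη.1])
  filter_upwards [ae_all_iff.2 hdecay, ae_infinite_setOf_of_iIndepFun hmeas hindep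
    (tsum_measure_setOf_eq_true_eq_top hbern hcard)] with ω hω hinf
  refine coe_le_liminf_of_tendsto_of_eventually_le (sum_retainedSup_rpow_pos hpos hcap hinf q)
    ?_ hω
  simpa using (tendsto_const_nhds (x := τq + d * (1 - η))).sub
    tendsto_one_div_add_atTop_nhds_zero_nat

/-- For a quasi-Bernoulli capacity `μ` and `q > 0` with `τ_μ(q) + d(1-η) > 0`, the
sampled capacity `M(I_W) = max{μ(I_{Wv}) : p_{Wv} = 1}` satisfies
`𝔼[∑_{W ∈ Σ_J} M(I_W)^q] ≤ C'_q 2^{-Jd(1-η)} ∑_{W ∈ Σ_J} μ(I_W)^q`, and consequently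
a.s. `liminf_J -(1/J) log₂ ∑_W M(I_W)^q ≥ τ_μ(q) + d(1-η)`. -/
theorem statement18 (d : ℕ) (hd : 1 ≤ d) (η q : ℝ) (hη : η ∈ Set.Ioo (0:ℝ) 1)
    (hq : 0 < q)
    {Ω : Type*} [MeasurableSpace Ω] (P : Measure Ω) [IsProbabilityMeasure P]
    (μ : List (Fin d → Bool) → ℝ) (C : ℝ) (hC : 1 ≤ C)
    (hpos : ∀ w, 0 < μ w)
    (hcap : ∀ w v : List (Fin d → Bool), μ (w ++ v) ≤ μ w)
    (hqb : ∀ w v : List (Fin d → Bool),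
      C⁻¹ * (μ w * μ v) ≤ μ (w ++ v) ∧ μ (w ++ v) ≤ C * (μ w * μ v))
    (τq : ℝ)
    (hτ : (τq : EReal) = Filter.liminf (fun J : ℕ =>
      ((-(1/(J:ℝ)) * Real.logb 2
        (∑ f : Fin J → (Fin d → Bool), μ (List.ofFn f) ^ q) : ℝ) : EReal)) Filter.atTop)
    (hτpos : 0 < τq + (d:ℝ) * (1 - η))
    (p : List (Fin d → Bool) → Ω → Bool)
    (hmeas : ∀ w, Measurable (p w))
    (hindep : iIndepFun p P)
    (hbern : ∀ w : List (Fin d → Bool),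
      P {ω | p w ω = true} = ENNReal.ofReal ((2:ℝ) ^ (-(d:ℝ) * (1 - η) * (w.length : ℝ))))
    (M : List (Fin d → Bool) → Ω → ℝ)
    (hM : ∀ W ω, M W ω
      = sSup {x : ℝ | ∃ v : List (Fin d → Bool), p (W ++ v) ω = true ∧ x = μ (W ++ v)}) :
    (∃ C' : ℝ, 0 < C' ∧ ∀ J : ℕ,
      ∫⁻ ω, ENNReal.ofReal
          (∑ f : Fin J → (Fin d → Bool), M (List.ofFn f) ω ^ q) ∂P
        ≤ ENNReal.ofReal (C' * (2:ℝ) ^ (-(J:ℝ) * (d:ℝ) * (1 - η))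
            * ∑ f : Fin J → (Fin d → Bool), μ (List.ofFn f) ^ q)) ∧
    (∀ᵐ ω ∂P, ((τq + (d:ℝ) * (1 - η) : ℝ) : EReal)
      ≤ Filter.liminf (fun J : ℕ =>
          ((-(1/(J:ℝ)) * Real.logb 2
            (∑ f : Fin J → (Fin d → Bool), M (List.ofFn f) ω ^ q) : ℝ) : EReal))
          Filter.atTop) :=
  statement18_general d η q hη hq P μ C hC hpos hcap hqb τq hτ hτpos p hmeas hindep hbern M hM
end
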